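/- Fix λ_u, λ, B, ρ > 0 and ω ∈ (0, 1), and set κ = λ_u/λ and ρ̂ = ρ/B. On a probability space, let W be a {0,1}-valued random variable with P(W = 1) = ω (the event that the typical user is served by an A-BS). Suppose: (i) conditional on W = 1, there are random variables N_{u,w} ∈ {1,2,…} with PMF K_t(λ_u, λ, ·), N_b ∈ {0,1,…} with PMF K(λ(1−ω), λω, ·), and SINR_d ∈ (0,∞) with P(SINR_d > τ | W = 1) = S_d(τ), conditionally mutually independent given W = 1; (ii) conditional on W = 0, there are random variables N_u ∈ {1,2,…} with PMF K_t(λ_u, λ, ·), N_b ∈ {1,2,…} with PMF K_t(λ(1−ω), λω, ·), N_{u,w} ∈ {0,1,…} with PMF K(λ_u, λ, ·), SINR_d with P(SINR_d > τ | W = 0) = S_d(τ), and SINR_b with P(SINR_b > τ | W = 0) = S_b(τ), conditionally mutually independent given W = 0. Define the rate Rate := (B/(N_{u,w} + κ·N_b))·log₂(1 + SINR_d) on {W = 1}, and Rate := (B/N_u)·min( (1 − κ/(κ·N_b + N_{u,w}))·log₂(1 + SINR_d), (κ/(κ·N_b + N_{u,w}))·log₂(1 + SINR_b) ) on {W = 0}.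 Then P(Rate > ρ) = ω·∑_{n≥0, m≥1} K(λ(1−ω), λω, n)·K_t(λ_u, λ, m)·S_d(2^{ρ̂(κn + m)} − 1) + (1−ω)·∑_{l≥1, n≥1, m≥0} K_t(λ_u, λ, l)·K_t(λ(1−ω), λω, n)·K(λ_u, λ, m)·S_b(2^{ρ̂·l·(n + m/κ)} − 1)·S_d(2^{ρ̂·l·(n + m/κ)/(n + m/κ − 1)} − 1), where in the second sum the term with n = 1 and m = 0 (for which n + m/κ − 1 = 0, so the access fraction is zero) is interpreted as 0. -/

import Mathlib

open MeasureTheory ProbabilityTheory Real Set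

/-- The load PMF of a typical cell:
`K(c,d,n) = (3.5^{3.5}/n!)·(Γ(n+3.5)/Γ(3.5))·(c/d)^n·(3.5 + c/d)^{−(n+3.5)}`. -/
noncomputable def Kpmf (c d : ℝ) (n : ℕ) : ℝ :=
  (3.5 : ℝ) ^ (3.5 : ℝ) / (n.factorial : ℝ)
    * (Real.Gamma ((n : ℝ) + 3.5) / Real.Gamma 3.5)
    * (c / d) ^ n * (3.5 + c / d) ^ (-((n : ℝ) + 3.5))

/-- The load PMF of the tagged cell (defined for `n ≥ 1`):
`K_t(c,d,n) = (3.5^{3.5}/(n−1)!)·(Γ(n+3.5)/Γ(3.5))·(c/d)^{n−1}·(3.5 + c/d)^{−(n+3.5)}`. -/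
noncomputable def Ktpmf (c d : ℝ) (n : ℕ) : ℝ :=
  (3.5 : ℝ) ^ (3.5 : ℝ) / ((n - 1).factorial : ℝ)
    * (Real.Gamma ((n : ℝ) + 3.5) / Real.Gamma 3.5)
    * (c / d) ^ (n - 1) * (3.5 + c / d) ^ (-((n : ℝ) + 3.5))

/-!
Condition on whether the typical user is served by an A-BS. On each cell of the (countably
valued) loads, the rate exceeds `ρ` exactly when the SINRs exceed explicit thresholds: invert
`B / D * log₂ (1 + s)`, and for a backhauled user split the `min` into the access and backhaul
constraints. Conditional independence factorises the probability of each cell, and summing over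
the load values gives the two series. The tagged-cell loads are almost surely nonzero because
`K_t(c, d, n + 1)` sums to `1` over `n`, by the negative binomial series
`∑ Γ(n + a) / n! · xⁿ = Γ(a) (1 - x)^(-a)`.
-/

open scoped Nat

theorem ascPochhammer_eval_eq_Gamma_div {a : ℝ} (ha : 0 < a) (n : ℕ) :
    (ascPochhammer ℝ n).eval a = Gamma (n + a) / Gamma a := by
  induction n with
  | zero => simp [(Gamma_pos_of_pos ha).ne']
  | succ n ih =>
    rw [ascPochhammer_succ_eval, ih, Nat.cast_succ, add_right_comm,
      Gamma_add_one (by positivity : (n : ℝ) + a ≠ 0)]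
    ring

theorem hasSum_Gamma_add_div_factorial_mul_pow {a x : ℝ} (ha : 0 < a) (hx : |x| < 1) :
    HasSum (fun n : ℕ => Gamma (n + a) / n ! * x ^ n) (Gamma a / (1 - x) ^ a) := by
  have hseries := (one_div_one_sub_rpow_hasFPowerSeriesOnBall_zero a).hasSum
    (y := x) (by simpa [enorm_eq_nnnorm, ← NNReal.coe_lt_coe] using hx)
  simp only [FormalMultilinearSeries.ofScalars_apply_eq, smul_eq_mul, zero_add] at hseries
  rw [div_eq_mul_one_div]
  refine (hseries.mul_left (Gamma a)).congr_fun fun n => ?_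
  rw [Ring.choose_eq_smul, Polynomial.descPochhammer_smeval_eq_ascPochhammer,
    Polynomial.ascPochhammer_smeval_eq_eval, show a + n - 1 - n + 1 = a by ring,
    ascPochhammer_eval_eq_Gamma_div ha, smul_eq_mul]
  field_simp [(Gamma_pos_of_pos ha).ne']

theorem hasSum_Ktpmf_succ {c d : ℝ} (hcd : 0 ≤ c / d) :
    HasSum (fun n : ℕ => Ktpmf c d (n + 1)) 1 := by
  simp only [Ktpmf, Nat.add_sub_cancel]
  generalize c / d = x at hcd ⊢
  have hx : 0 < 3.5 + x := by positivity
  have ht : |x / (3.5 + x)| < 1 := by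
    rw [abs_of_nonneg (by positivity), div_lt_one hx]; linarith
  have hseries := (hasSum_Gamma_add_div_factorial_mul_pow (by norm_num : (0 : ℝ) < 4.5) ht).mul_left
    ((3.5 : ℝ) ^ (3.5 : ℝ) / Gamma 3.5 * (3.5 + x) ^ (-(4.5 : ℝ)))
  have hsum : (3.5 : ℝ) ^ (3.5 : ℝ) / Gamma 3.5 * (3.5 + x) ^ (-(4.5 : ℝ))
      * (Gamma 4.5 / (1 - x / (3.5 + x)) ^ (4.5 : ℝ)) = 1 := by
    rw [show 1 - x / (3.5 + x) = 3.5 / (3.5 + x) by field_simp [hx.ne']; ring,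
      show (4.5 : ℝ) = 3.5 + 1 by norm_num, Gamma_add_one (by norm_num),
      div_rpow (by norm_num) hx.le, rpow_neg hx.le, rpow_add_one hx.ne',
      rpow_add_one (by norm_num : (3.5 : ℝ) ≠ 0)]
    field_simp [(Gamma_pos_of_pos (by norm_num : (0 : ℝ) < 3.5)).ne']
  rw [hsum] at hseries
  refine hseries.congr_fun fun n => ?_
  rw [Nat.cast_succ, show (n : ℝ) + 1 + 3.5 = n + 4.5 by ring,
    show -((n : ℝ) + 4.5) = -(4.5 : ℝ) + -n by ring,
    rpow_add hx, rpow_neg hx.le (n : ℝ), rpow_natCast, div_pow]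
  field_simp

section Decomposition

variable {Ω : Type*} [MeasurableSpace Ω] (μ : Measure Ω)

theorem measure_eq_tsum_inter_preimage_singleton {α : Type*} [MeasurableSpace α] [Countable α]
    [MeasurableSingletonClass α] {X : Ω → α} (hX : Measurable X) (E : Set Ω) :
    μ E = ∑' a, μ (E ∩ X ⁻¹' {a}) := by
  have hfibers : μ.restrict E (⋃ a, X ⁻¹' {a}) = ∑' a, μ.restrict E (X ⁻¹' {a}) :=
    measure_iUnion (fun a b hab => (disjoint_singleton.2 hab).preimage X)
      fun a => hX (measurableSet_singleton a)
  rw [← preimage_iUnion, iUnion_of_singleton, preimage_univ, Measure.restrict_apply_univ]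
    at hfibers
  simp_rw [hfibers, Measure.restrict_apply (hX (measurableSet_singleton _)), inter_comm]

theorem toReal_measure_eq_tsum_inter_preimage_singleton [IsFiniteMeasure μ] {α : Type*}
    [MeasurableSpace α] [Countable α] [MeasurableSingletonClass α] {X : Ω → α}
    (hX : Measurable X) (E : Set Ω) :
    (μ E).toReal = ∑' a, (μ (E ∩ X ⁻¹' {a})).toReal := by
  rw [measure_eq_tsum_inter_preimage_singleton μ hX, ENNReal.tsum_toReal_eq
    fun _ => measure_ne_top μ _]

theorem toReal_measure_eq_tsum_inter_preimage_succ [IsFiniteMeasure μ] {N : Ω → ℕ}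
    (hN : Measurable N) (hN0 : μ (N ⁻¹' {0}) = 0) (E : Set Ω) :
    (μ E).toReal = ∑' n, (μ (E ∩ N ⁻¹' {n + 1})).toReal := by
  rw [measure_eq_tsum_inter_preimage_singleton μ hN, tsum_eq_zero_add' ENNReal.summable,
    measure_mono_null inter_subset_right hN0, zero_add,
    ENNReal.tsum_toReal_eq fun _ => measure_ne_top μ _]

theorem measure_preimage_zero_eq_zero_of_hasSum [IsProbabilityMeasure μ] {N : Ω → ℕ}
    (hN : Measurable N) {p : ℕ → ℝ} (hNp : ∀ n, (μ (N ⁻¹' {n + 1})).toReal = p n)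
    (hp : HasSum p 1) : μ (N ⁻¹' {0}) = 0 := by
  have htotal := toReal_measure_eq_tsum_inter_preimage_singleton μ hN univ
  simp_rw [univ_inter, measure_univ, ENNReal.toReal_one] at htotal
  rw [tsum_eq_zero_add' (hp.summable.congr fun n => (hNp n).symm), tsum_congr hNp, hp.tsum_eq,
    right_eq_add, ENNReal.toReal_eq_zero_iff] at htotal
  exact htotal.resolve_right (measure_ne_top μ _)

theorem cond_congr_of_forall_mem {s t t' : Set Ω} (hs : MeasurableSet s)
    (h : ∀ ω ∈ s, ω ∈ t ↔ ω ∈ t') : μ[t | s] = μ[t' | s] := by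
  rw [← cond_inter_self hs t, ← cond_inter_self hs t']
  congr 1
  ext ω
  exact and_congr_right (h ω)

end Decomposition

/- The rates of equation (1): `wiredRate κ B N_{u,w} N_b SINR_d` for a user of an A-BS, and
`backhauledRate κ B N_u N_b N_{u,w} SINR_d SINR_b` for a user of a wirelessly backhauled BS. -/
noncomputable def wiredRate (κ B : ℝ) (nuw nb : ℕ) (s : ℝ) : ℝ :=
  B / ((nuw : ℝ) + κ * nb) * logb 2 (1 + s)

noncomputable def backhauledRate (κ B : ℝ) (nu nb nuw : ℕ) (sd sb : ℝ) : ℝ :=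
  B / (nu : ℝ) * min ((1 - κ / (κ * nb + nuw)) * logb 2 (1 + sd))
    ((κ / (κ * nb + nuw)) * logb 2 (1 + sb))

theorem lt_mul_logb_one_add_iff {a c s : ℝ} (ha : 0 < a) (hs : 0 < 1 + s) :
    c < a * logb 2 (1 + s) ↔ 2 ^ (c / a) - 1 < s := by
  rw [← div_lt_iff₀' ha, lt_logb_iff_rpow_lt one_lt_two hs, sub_lt_iff_lt_add']

theorem lt_wiredRate_iff {κ B ρ s : ℝ} (hκ : 0 ≤ κ) (hB : 0 < B) (hs : 0 < 1 + s) (n m : ℕ) :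
    ρ < wiredRate κ B (m + 1) n s ↔ 2 ^ (ρ / B * (κ * n + (m + 1))) - 1 < s := by
  have hD : 0 < ((m + 1 : ℕ) : ℝ) + κ * n := by positivity
  rw [wiredRate, lt_mul_logb_one_add_iff (div_pos hB hD) hs]
  push_cast
  field_simp
  ring_nf

theorem lt_backhauledRate_iff {κ B ρ sd sb : ℝ} (hκ : 0 < κ) (hB : 0 < B) (hsd : 0 < 1 + sd)
    (hsb : 0 < 1 + sb) {k n m : ℕ} (hnm : ¬(n = 0 ∧ m = 0)) :
    ρ < backhauledRate κ B (k + 1) (n + 1) m sd sb ↔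
      2 ^ (ρ / B * (k + 1) * ((n + 1) + m / κ) / ((n + 1) + m / κ - 1)) - 1 < sd ∧
        2 ^ (ρ / B * (k + 1) * ((n + 1) + m / κ)) - 1 < sb := by
  -- the backhaul fraction is `1 / X` and the access fraction `1 - 1 / X`
  set X : ℝ := n + 1 + m / κ
  have hX : 1 < X := by
    rcases Nat.eq_zero_or_pos n with rfl | hn
    · have hm : (0 : ℝ) < m := by exact_mod_cast Nat.pos_of_ne_zero (by tauto)
      have := div_pos hm hκ
      simp only [X]; push_cast; linarith
    · have hn : (1 : ℝ) ≤ n := by exact_mod_cast hn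
      have := div_nonneg (Nat.cast_nonneg m) hκ.le
      linarith
  have hfrac : κ / (κ * ((n + 1 : ℕ) : ℝ) + m) = 1 / X := by
    simp only [X]; push_cast; field_simp
  have ha : 0 < B / ((k + 1 : ℕ) : ℝ) := by positivity
  rw [backhauledRate, hfrac, mul_min_of_nonneg _ _ ha.le, lt_min_iff, ← mul_assoc, ← mul_assoc,
    lt_mul_logb_one_add_iff (mul_pos ha (by rw [sub_pos, div_lt_one (by linarith)]; exact hX)) hsd,
    lt_mul_logb_one_add_iff (mul_pos ha (by positivity)) hsb]
  have hX1 : X - 1 ≠ 0 := by linarith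
  push_cast
  congr! 4 <;> field_simp

theorem backhauledRate_one_zero_nonpos {κ B : ℝ} (hκ : κ ≠ 0) (hB : 0 ≤ B) (nu : ℕ) (sd sb : ℝ) :
    backhauledRate κ B nu 1 0 sd sb ≤ 0 := by
  rw [backhauledRate, Nat.cast_one, Nat.cast_zero, mul_one, add_zero, div_self hκ, sub_self,
    zero_mul]
  exact mul_nonpos_of_nonneg_of_nonpos (by positivity) (min_le_left _ _)

section Coverage

variable {Ω : Type*} [MeasurableSpace Ω] (μ : Measure Ω) [IsProbabilityMeasure μ]

theorem toReal_measure_lt_wiredRate {κ B ρ : ℝ} (hκ : 0 ≤ κ) (hB : 0 < B)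
    {Nuw Nb : Ω → ℕ} {SINRd : Ω → ℝ} {Sd : ℝ → ℝ} {pM pN : ℕ → ℝ}
    (hNuw : Measurable Nuw) (hNb : Measurable Nb)
    (hpM : ∀ m : ℕ, (μ (Nuw ⁻¹' {m + 1})).toReal = pM m) (hpM1 : HasSum pM 1)
    (hpN : ∀ n : ℕ, (μ (Nb ⁻¹' {n})).toReal = pN n)
    (hSd : ∀ τ : ℝ, (μ (SINRd ⁻¹' Ioi τ)).toReal = Sd τ)
    (hpos : ∀ᵐ ω ∂μ, 0 < SINRd ω)
    (hindep : ∀ (s₁ s₂ : Set ℕ) (s₃ : Set ℝ), MeasurableSet s₃ →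
      μ (Nuw ⁻¹' s₁ ∩ Nb ⁻¹' s₂ ∩ SINRd ⁻¹' s₃)
        = μ (Nuw ⁻¹' s₁) * μ (Nb ⁻¹' s₂) * μ (SINRd ⁻¹' s₃)) :
    (μ {ω | ρ < wiredRate κ B (Nuw ω) (Nb ω) (SINRd ω)}).toReal
      = ∑' (n : ℕ) (m : ℕ), pN n * pM m * Sd (2 ^ (ρ / B * (κ * n + (m + 1))) - 1) := by
  rw [toReal_measure_eq_tsum_inter_preimage_singleton μ hNb]
  refine tsum_congr fun n => ?_
  rw [toReal_measure_eq_tsum_inter_preimage_succ μ hNuw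
    (measure_preimage_zero_eq_zero_of_hasSum μ hNuw hpM hpM1)]
  refine tsum_congr fun m => ?_
  have hcell : ({ω | ρ < wiredRate κ B (Nuw ω) (Nb ω) (SINRd ω)} ∩ Nb ⁻¹' {n} ∩ Nuw ⁻¹' {m + 1}
      : Set Ω) =ᵐ[μ] (Nuw ⁻¹' {m + 1} ∩ Nb ⁻¹' {n} ∩ SINRd ⁻¹' Ioi (2 ^ (ρ / B * (κ * n + (m + 1))) - 1)
      : Set Ω) := by
    rw [Filter.eventuallyEq_set]
    filter_upwards [hpos] with ω hω
    simp only [mem_inter_iff, mem_ofPred_eq, mem_preimage, mem_singleton_iff, mem_Ioi]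
    by_cases hcell : Nb ω = n ∧ Nuw ω = m + 1
    · rw [hcell.1, hcell.2, lt_wiredRate_iff hκ hB (by linarith)]
      tauto
    · tauto
  rw [measure_congr hcell, hindep _ _ _ measurableSet_Ioi, ENNReal.toReal_mul, ENNReal.toReal_mul,
    hpM, hpN, hSd]
  ring

theorem toReal_measure_lt_backhauledRate {κ B ρ : ℝ} (hκ : 0 < κ) (hB : 0 < B) (hρ : 0 ≤ ρ)
    {Nu Nb Nuw : Ω → ℕ} {SINRd SINRb : Ω → ℝ} {Sd Sb : ℝ → ℝ} {pK pN pM : ℕ → ℝ}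
    (hNu : Measurable Nu) (hNb : Measurable Nb) (hNuw : Measurable Nuw)
    (hpK : ∀ k : ℕ, (μ (Nu ⁻¹' {k + 1})).toReal = pK k) (hpK1 : HasSum pK 1)
    (hpN : ∀ n : ℕ, (μ (Nb ⁻¹' {n + 1})).toReal = pN n) (hpN1 : HasSum pN 1)
    (hpM : ∀ m : ℕ, (μ (Nuw ⁻¹' {m})).toReal = pM m)
    (hSd : ∀ τ : ℝ, (μ (SINRd ⁻¹' Ioi τ)).toReal = Sd τ)
    (hSb : ∀ τ : ℝ, (μ (SINRb ⁻¹' Ioi τ)).toReal = Sb τ)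
    (hposd : ∀ᵐ ω ∂μ, 0 < SINRd ω) (hposb : ∀ᵐ ω ∂μ, 0 < SINRb ω)
    (hindep : ∀ (s₁ s₂ s₃ : Set ℕ) (t₁ t₂ : Set ℝ), MeasurableSet t₁ → MeasurableSet t₂ →
      μ (Nu ⁻¹' s₁ ∩ Nb ⁻¹' s₂ ∩ Nuw ⁻¹' s₃ ∩ SINRd ⁻¹' t₁ ∩ SINRb ⁻¹' t₂)
        = μ (Nu ⁻¹' s₁) * μ (Nb ⁻¹' s₂) * μ (Nuw ⁻¹' s₃)
            * μ (SINRd ⁻¹' t₁) * μ (SINRb ⁻¹' t₂)) :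
    (μ {ω | ρ < backhauledRate κ B (Nu ω) (Nb ω) (Nuw ω) (SINRd ω) (SINRb ω)}).toReal
      = ∑' (k : ℕ) (n : ℕ) (m : ℕ), if n = 0 ∧ m = 0 then 0 else
          pK k * pN n * pM m * Sb (2 ^ (ρ / B * (k + 1) * ((n + 1) + m / κ)) - 1)
            * Sd (2 ^ (ρ / B * (k + 1) * ((n + 1) + m / κ) / ((n + 1) + m / κ - 1)) - 1) := by
  rw [toReal_measure_eq_tsum_inter_preimage_succ μ hNu
    (measure_preimage_zero_eq_zero_of_hasSum μ hNu hpK hpK1)]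
  refine tsum_congr fun k => ?_
  rw [toReal_measure_eq_tsum_inter_preimage_succ μ hNb
    (measure_preimage_zero_eq_zero_of_hasSum μ hNb hpN hpN1)]
  refine tsum_congr fun n => ?_
  rw [toReal_measure_eq_tsum_inter_preimage_singleton μ hNuw]
  refine tsum_congr fun m => ?_
  split_ifs with hnm
  · obtain ⟨rfl, rfl⟩ := hnm
    convert ENNReal.toReal_zero
    refine measure_mono_null (fun ω hω => ?_) measure_empty
    obtain ⟨⟨⟨hlt, -⟩, hb⟩, hu⟩ := hω
    rw [mem_preimage, mem_singleton_iff] at hb hu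
    rw [mem_ofPred_eq, hb, hu] at hlt
    exact (backhauledRate_one_zero_nonpos hκ.ne' hB.le _ _ _).not_gt (hρ.trans_lt hlt)
  have hcell : ({ω | ρ < backhauledRate κ B (Nu ω) (Nb ω) (Nuw ω) (SINRd ω) (SINRb ω)}
        ∩ Nu ⁻¹' {k + 1} ∩ Nb ⁻¹' {n + 1} ∩ Nuw ⁻¹' {m} : Set Ω)
      =ᵐ[μ] (Nu ⁻¹' {k + 1} ∩ Nb ⁻¹' {n + 1} ∩ Nuw ⁻¹' {m}
        ∩ SINRd ⁻¹' Ioi (2 ^ (ρ / B * (k + 1) * ((n + 1) + m / κ) / ((n + 1) + m / κ - 1)) - 1)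
        ∩ SINRb ⁻¹' Ioi (2 ^ (ρ / B * (k + 1) * ((n + 1) + m / κ)) - 1) : Set Ω) := by
    rw [Filter.eventuallyEq_set]
    filter_upwards [hposd, hposb] with ω hωd hωb
    simp only [mem_inter_iff, mem_ofPred_eq, mem_preimage, mem_singleton_iff, mem_Ioi]
    by_cases hcell : Nu ω = k + 1 ∧ Nb ω = n + 1 ∧ Nuw ω = m
    · rw [hcell.1, hcell.2.1, hcell.2.2,
        lt_backhauledRate_iff hκ hB (by linarith) (by linarith) hnm]
      tauto
    · tauto
  rw [measure_congr hcell, hindep _ _ _ _ _ measurableSet_Ioi measurableSet_Ioi]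
  simp only [ENNReal.toReal_mul, hpK, hpN, hpM, hSd, hSb]
  ring

end Coverage

theorem rate_coverage_self_backhaul_general {Ω : Type*} [MeasurableSpace Ω]
    (Pr : Measure Ω) [IsProbabilityMeasure Pr]
    (lu l B ρ w : ℝ) (hlu : 0 < lu) (hl : 0 < l) (hB : 0 < B) (hρ : 0 < ρ)
    (hw0 : 0 < w) (hw1 : w < 1)
    (A : Set Ω) (hA : MeasurableSet A) (hPA : (Pr A).toReal = w)
    (Nuw Nb Nu : Ω → ℕ) (SINRd SINRb : Ω → ℝ) (Sd Sb : ℝ → ℝ)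
    (hNuw : Measurable Nuw) (hNb : Measurable Nb) (hNu : Measurable Nu)
    -- conditional on A: distributions of N_{u,w} ∈ {1,2,…}, N_b ∈ {0,1,…}, SINR_d ∈ (0,∞)
    (hA_Nuw : ∀ n : ℕ, (Pr[|A] {ω | Nuw ω = n + 1}).toReal = Ktpmf lu l (n + 1))
    (hA_Nb : ∀ n : ℕ, (Pr[|A] {ω | Nb ω = n}).toReal = Kpmf (l * (1 - w)) (l * w) n)
    (hA_Sd : ∀ τ : ℝ, (Pr[|A] {ω | SINRd ω > τ}).toReal = Sd τ)
    (hA_pos : ∀ᵐ ω ∂(Pr[|A]), 0 < SINRd ω)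
    -- conditional mutual independence given A
    (hA_indep : ∀ (s₁ s₂ : Set ℕ) (s₃ : Set ℝ), MeasurableSet s₃ →
      Pr[|A] (Nuw ⁻¹' s₁ ∩ Nb ⁻¹' s₂ ∩ SINRd ⁻¹' s₃)
        = Pr[|A] (Nuw ⁻¹' s₁) * Pr[|A] (Nb ⁻¹' s₂) * Pr[|A] (SINRd ⁻¹' s₃))
    -- conditional on Aᶜ: distributions of N_u ∈ {1,2,…}, N_b ∈ {1,2,…}, N_{u,w} ∈ {0,1,…},
    -- SINR_d and SINR_b ∈ (0,∞)
    (hAc_Nu : ∀ n : ℕ, (Pr[|Aᶜ] {ω | Nu ω = n + 1}).toReal = Ktpmf lu l (n + 1))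
    (hAc_Nb : ∀ n : ℕ,
      (Pr[|Aᶜ] {ω | Nb ω = n + 1}).toReal = Ktpmf (l * (1 - w)) (l * w) (n + 1))
    (hAc_Nuw : ∀ n : ℕ, (Pr[|Aᶜ] {ω | Nuw ω = n}).toReal = Kpmf lu l n)
    (hAc_Sd : ∀ τ : ℝ, (Pr[|Aᶜ] {ω | SINRd ω > τ}).toReal = Sd τ)
    (hAc_Sb : ∀ τ : ℝ, (Pr[|Aᶜ] {ω | SINRb ω > τ}).toReal = Sb τ)
    (hAc_posd : ∀ᵐ ω ∂(Pr[|Aᶜ]), 0 < SINRd ω)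
    (hAc_posb : ∀ᵐ ω ∂(Pr[|Aᶜ]), 0 < SINRb ω)
    -- conditional mutual independence given Aᶜ
    (hAc_indep : ∀ (s₁ s₂ s₃ : Set ℕ) (t₁ t₂ : Set ℝ),
      MeasurableSet t₁ → MeasurableSet t₂ →
      Pr[|Aᶜ] (Nu ⁻¹' s₁ ∩ Nb ⁻¹' s₂ ∩ Nuw ⁻¹' s₃ ∩ SINRd ⁻¹' t₁ ∩ SINRb ⁻¹' t₂)
        = Pr[|Aᶜ] (Nu ⁻¹' s₁) * Pr[|Aᶜ] (Nb ⁻¹' s₂) * Pr[|Aᶜ] (Nuw ⁻¹' s₃)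
            * Pr[|Aᶜ] (SINRd ⁻¹' t₁) * Pr[|Aᶜ] (SINRb ⁻¹' t₂))
    -- the rate of equation (1)
    (Rate : Ω → ℝ)
    (hRateA : ∀ ω ∈ A,
      Rate ω = B / ((Nuw ω : ℝ) + (lu / l) * (Nb ω : ℝ)) * Real.logb 2 (1 + SINRd ω))
    (hRateAc : ∀ ω ∉ A,
      Rate ω = B / (Nu ω : ℝ)
        * min ((1 - (lu / l) / ((lu / l) * (Nb ω : ℝ) + (Nuw ω : ℝ)))
                * Real.logb 2 (1 + SINRd ω))
              (((lu / l) / ((lu / l) * (Nb ω : ℝ) + (Nuw ω : ℝ)))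
                * Real.logb 2 (1 + SINRb ω))) :
    (Pr {ω | Rate ω > ρ}).toReal
      = w * ∑' (n : ℕ) (m : ℕ),
            Kpmf (l * (1 - w)) (l * w) n * Ktpmf lu l (m + 1)
              * Sd ((2 : ℝ) ^ ((ρ / B) * ((lu / l) * (n : ℝ) + ((m : ℝ) + 1))) - 1)
        + (1 - w) * ∑' (k : ℕ) (n : ℕ) (m : ℕ),
            (if n = 0 ∧ m = 0 then 0 else
              Ktpmf lu l (k + 1) * Ktpmf (l * (1 - w)) (l * w) (n + 1) * Kpmf lu l m
                * Sb ((2 : ℝ) ^ ((ρ / B) * ((k : ℝ) + 1)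
                        * (((n : ℝ) + 1) + (m : ℝ) / (lu / l))) - 1)
                * Sd ((2 : ℝ) ^ ((ρ / B) * ((k : ℝ) + 1)
                        * (((n : ℝ) + 1) + (m : ℝ) / (lu / l))
                        / (((n : ℝ) + 1) + (m : ℝ) / (lu / l) - 1)) - 1)) := by
  have hPAc : (Pr Aᶜ).toReal = 1 - w := by
    rw [prob_compl_eq_one_sub hA, ENNReal.toReal_sub_of_le prob_le_one ENNReal.one_ne_top,
      ENNReal.toReal_one, hPA]
  have : IsProbabilityMeasure Pr[|A] :=
    cond_isProbabilityMeasure fun h => by rw [h, ENNReal.toReal_zero] at hPA; linarith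
  have : IsProbabilityMeasure Pr[|Aᶜ] :=
    cond_isProbabilityMeasure fun h => by rw [h, ENNReal.toReal_zero] at hPAc; linarith
  have hwired : Pr[{ω | Rate ω > ρ} | A]
      = Pr[{ω | ρ < wiredRate (lu / l) B (Nuw ω) (Nb ω) (SINRd ω)} | A] :=
    cond_congr_of_forall_mem Pr hA fun ω hω => by rw [mem_ofPred_eq, hRateA ω hω]; rfl
  have hbackhauled : Pr[{ω | Rate ω > ρ} | Aᶜ]
      = Pr[{ω | ρ < backhauledRate (lu / l) B (Nu ω) (Nb ω) (Nuw ω) (SINRd ω) (SINRb ω)} | Aᶜ] :=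
    cond_congr_of_forall_mem Pr hA.compl fun ω hω => by rw [mem_ofPred_eq, hRateAc ω hω]; rfl
  have hκ : 0 < lu / l := div_pos hlu hl
  have hKt_load := hasSum_Ktpmf_succ hκ.le
  have hKt_backhaul := hasSum_Ktpmf_succ (c := l * (1 - w)) (d := l * w)
    (div_nonneg (mul_nonneg hl.le (by linarith)) (mul_nonneg hl.le hw0.le))
  rw [← cond_add_cond_compl_eq hA Pr, ENNReal.toReal_add (by finiteness) (by finiteness),
    ENNReal.toReal_mul, ENNReal.toReal_mul, hPA, hPAc, hwired, hbackhauled,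
    toReal_measure_lt_wiredRate _ hκ.le hB hNuw hNb hA_Nuw hKt_load hA_Nb hA_Sd hA_pos hA_indep,
    toReal_measure_lt_backhauledRate _ hκ hB hρ.le hNu hNb hNuw hAc_Nu hKt_load hAc_Nb
      hKt_backhaul hAc_Nuw hAc_Sd hAc_Sb hAc_posd hAc_posb hAc_indep]
  ring

/-- Rate coverage of a self-backhauled mmWave network (Lemma 2 of the paper).
`A` is the event that the typical user is served by an A-BS (`P(A) = w`); conditional on `A`
the loads `N_{u,w}`, `N_b` and the access SINR are mutually independent with the displayed
distributions, and conditional on `Aᶜ` the loads `N_u`, `N_b`, `N_{u,w}` and the access and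
backhaul SINRs are mutually independent with the displayed distributions.  With
`κ = λ_u/λ` and `ρ̂ = ρ/B`, the rate of equation (1) has the coverage of equation (5),
the doubly-degenerate backhaul term (`n = 1`, `m = 0`) being interpreted as `0`. -/
theorem rate_coverage_self_backhaul {Ω : Type*} [MeasurableSpace Ω]
    (Pr : Measure Ω) [IsProbabilityMeasure Pr]
    (lu l B ρ w : ℝ) (hlu : 0 < lu) (hl : 0 < l) (hB : 0 < B) (hρ : 0 < ρ)
    (hw0 : 0 < w) (hw1 : w < 1)
    (A : Set Ω) (hA : MeasurableSet A) (hPA : (Pr A).toReal = w)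
    (Nuw Nb Nu : Ω → ℕ) (SINRd SINRb : Ω → ℝ) (Sd Sb : ℝ → ℝ)
    (hNuw : Measurable Nuw) (hNb : Measurable Nb) (hNu : Measurable Nu)
    (hSINRd : Measurable SINRd) (hSINRb : Measurable SINRb)
    -- conditional on A: distributions of N_{u,w} ∈ {1,2,…}, N_b ∈ {0,1,…}, SINR_d ∈ (0,∞)
    (hA_Nuw : ∀ n : ℕ, (Pr[|A] {ω | Nuw ω = n + 1}).toReal = Ktpmf lu l (n + 1))
    (hA_Nb : ∀ n : ℕ, (Pr[|A] {ω | Nb ω = n}).toReal = Kpmf (l * (1 - w)) (l * w) n)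
    (hA_Sd : ∀ τ : ℝ, (Pr[|A] {ω | SINRd ω > τ}).toReal = Sd τ)
    (hA_pos : ∀ᵐ ω ∂(Pr[|A]), 0 < SINRd ω)
    -- conditional mutual independence given A
    (hA_indep : ∀ (s₁ s₂ : Set ℕ) (s₃ : Set ℝ), MeasurableSet s₃ →
      Pr[|A] (Nuw ⁻¹' s₁ ∩ Nb ⁻¹' s₂ ∩ SINRd ⁻¹' s₃)
        = Pr[|A] (Nuw ⁻¹' s₁) * Pr[|A] (Nb ⁻¹' s₂) * Pr[|A] (SINRd ⁻¹' s₃))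
    -- conditional on Aᶜ: distributions of N_u ∈ {1,2,…}, N_b ∈ {1,2,…}, N_{u,w} ∈ {0,1,…},
    -- SINR_d and SINR_b ∈ (0,∞)
    (hAc_Nu : ∀ n : ℕ, (Pr[|Aᶜ] {ω | Nu ω = n + 1}).toReal = Ktpmf lu l (n + 1))
    (hAc_Nb : ∀ n : ℕ,
      (Pr[|Aᶜ] {ω | Nb ω = n + 1}).toReal = Ktpmf (l * (1 - w)) (l * w) (n + 1))
    (hAc_Nuw : ∀ n : ℕ, (Pr[|Aᶜ] {ω | Nuw ω = n}).toReal = Kpmf lu l n)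
    (hAc_Sd : ∀ τ : ℝ, (Pr[|Aᶜ] {ω | SINRd ω > τ}).toReal = Sd τ)
    (hAc_Sb : ∀ τ : ℝ, (Pr[|Aᶜ] {ω | SINRb ω > τ}).toReal = Sb τ)
    (hAc_posd : ∀ᵐ ω ∂(Pr[|Aᶜ]), 0 < SINRd ω)
    (hAc_posb : ∀ᵐ ω ∂(Pr[|Aᶜ]), 0 < SINRb ω)
    -- conditional mutual independence given Aᶜ
    (hAc_indep : ∀ (s₁ s₂ s₃ : Set ℕ) (t₁ t₂ : Set ℝ),
      MeasurableSet t₁ → MeasurableSet t₂ →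
      Pr[|Aᶜ] (Nu ⁻¹' s₁ ∩ Nb ⁻¹' s₂ ∩ Nuw ⁻¹' s₃ ∩ SINRd ⁻¹' t₁ ∩ SINRb ⁻¹' t₂)
        = Pr[|Aᶜ] (Nu ⁻¹' s₁) * Pr[|Aᶜ] (Nb ⁻¹' s₂) * Pr[|Aᶜ] (Nuw ⁻¹' s₃)
            * Pr[|Aᶜ] (SINRd ⁻¹' t₁) * Pr[|Aᶜ] (SINRb ⁻¹' t₂))
    -- the rate of equation (1)
    (Rate : Ω → ℝ)
    (hRateA : ∀ ω ∈ A,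
      Rate ω = B / ((Nuw ω : ℝ) + (lu / l) * (Nb ω : ℝ)) * Real.logb 2 (1 + SINRd ω))
    (hRateAc : ∀ ω ∉ A,
      Rate ω = B / (Nu ω : ℝ)
        * min ((1 - (lu / l) / ((lu / l) * (Nb ω : ℝ) + (Nuw ω : ℝ)))
                * Real.logb 2 (1 + SINRd ω))
              (((lu / l) / ((lu / l) * (Nb ω : ℝ) + (Nuw ω : ℝ)))
                * Real.logb 2 (1 + SINRb ω))) :
    (Pr {ω | Rate ω > ρ}).toReal
      = w * ∑' (n : ℕ) (m : ℕ),
            Kpmf (l * (1 - w)) (l * w) n * Ktpmf lu l (m + 1)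
              * Sd ((2 : ℝ) ^ ((ρ / B) * ((lu / l) * (n : ℝ) + ((m : ℝ) + 1))) - 1)
        + (1 - w) * ∑' (k : ℕ) (n : ℕ) (m : ℕ),
            (if n = 0 ∧ m = 0 then 0 else
              Ktpmf lu l (k + 1) * Ktpmf (l * (1 - w)) (l * w) (n + 1) * Kpmf lu l m
                * Sb ((2 : ℝ) ^ ((ρ / B) * ((k : ℝ) + 1)
                        * (((n : ℝ) + 1) + (m : ℝ) / (lu / l))) - 1)
                * Sd ((2 : ℝ) ^ ((ρ / B) * ((k : ℝ) + 1)
                        * (((n : ℝ) + 1) + (m : ℝ) / (lu / l))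
                        / (((n : ℝ) + 1) + (m : ℝ) / (lu / l) - 1)) - 1)) :=
  rate_coverage_self_backhaul_general Pr lu l B ρ w hlu hl hB hρ hw0 hw1 A hA hPA Nuw Nb Nu SINRd
    SINRb Sd Sb hNuw hNb hNu hA_Nuw hA_Nb hA_Sd hA_pos hA_indep hAc_Nu hAc_Nb hAc_Nuw hAc_Sd hAc_Sb
    hAc_posd hAc_posb hAc_indep Rate hRateA hRateAc
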